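/- arXiv:2208.14994 — 2 statements merged into one kernel-verified Lean document; each statement's English description precedes it below -/
import Mathlib

section
/- Let p ∈ ℕ, h > 0, ℓ > 0 and set ℓ̂ = ℓ/h. Then the maximum value of the smoothed level set satisfies the two-sided bound ℓ̂ √(3/(π(p+1))) · exp( −3ℓ̂²/(4(p+1)) ) ≤ erf( √3 ℓ̂ / (2√(p+1)) ) ≤ ℓ̂ √(3/(π(p+1))). In particular, the maximum of the smoothed level set depends linearly on the relative feature size ℓ̂ up to a factor tending to 1 as ℓ̂ → 0, and is bounded above by a quantity decreasing in the B-spline order p. -/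
open MeasureTheory intervalIntegral

/-- The error function `erf t = (2/√π) ∫₀ᵗ exp(−s²) ds`. -/
noncomputable def erf (t : ℝ) : ℝ :=
  (2 / Real.sqrt Real.pi) * ∫ s in (0:ℝ)..t, Real.exp (-s ^ 2)

/-! With `t = √3 ℓ̂ / (2√(p+1))` one has `t² = 3ℓ̂²/(4(p+1))` and `(2/√π) t = ℓ̂ √(3/(π(p+1)))`,
so the claim is `(2/√π) t e^{-t²} ≤ erf t ≤ (2/√π) t`. This is the rectangle estimate for the
integral of the decreasing function `e^{-s²}` over `[0, t]`. -/

theorem AntitoneOn.mul_le_intervalIntegral {f : ℝ → ℝ} {a b : ℝ} (hab : a ≤ b)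
    (hf : AntitoneOn f (Set.Icc a b)) : (b - a) * f b ≤ ∫ x in a..b, f x := by
  rw [← smul_eq_mul, ← intervalIntegral.integral_const]
  exact integral_mono_on hab intervalIntegrable_const
    (Set.uIcc_of_le hab ▸ hf).intervalIntegrable
    fun x hx => hf hx (Set.right_mem_Icc.2 hab) hx.2

theorem AntitoneOn.intervalIntegral_le_mul {f : ℝ → ℝ} {a b : ℝ} (hab : a ≤ b)
    (hf : AntitoneOn f (Set.Icc a b)) : ∫ x in a..b, f x ≤ (b - a) * f a := by
  rw [← smul_eq_mul, ← intervalIntegral.integral_const]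
  exact integral_mono_on hab (Set.uIcc_of_le hab ▸ hf).intervalIntegrable
    intervalIntegrable_const
    fun x hx => hf (Set.left_mem_Icc.2 hab) hx hx.1

theorem antitoneOn_exp_neg_sq : AntitoneOn (fun s : ℝ => Real.exp (-s ^ 2)) (Set.Ici 0) :=
  fun _ hx _ _ hxy => Real.exp_le_exp.2 (neg_le_neg (pow_le_pow_left₀ hx hxy 2))

theorem mul_exp_neg_sq_le_erf {t : ℝ} (ht : 0 ≤ t) :
    2 / Real.sqrt Real.pi * t * Real.exp (-t ^ 2) ≤ erf t := by
  have := (antitoneOn_exp_neg_sq.mono Set.Icc_subset_Ici_self).mul_le_intervalIntegral ht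
  rw [sub_zero] at this
  rw [erf, mul_assoc]
  gcongr

theorem erf_le_mul {t : ℝ} (ht : 0 ≤ t) : erf t ≤ 2 / Real.sqrt Real.pi * t := by
  have := (antitoneOn_exp_neg_sq.mono Set.Icc_subset_Ici_self).intervalIntegral_le_mul ht
  rw [sub_zero, zero_pow two_ne_zero, neg_zero, Real.exp_zero, mul_one] at this
  rw [erf]
  gcongr

/-- Two-sided bound on the maximum value of the smoothed level set in terms of the
relative feature size `ℓ̂ = ℓ/h`:
`ℓ̂ √(3/(π(p+1))) exp(−3ℓ̂²/(4(p+1))) ≤ erf(√3 ℓ̂/(2√(p+1))) ≤ ℓ̂ √(3/(π(p+1)))`. -/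
theorem smoothed_max_two_sided_bound (p : ℕ) (h ℓ : ℝ) (hh : 0 < h) (hℓ : 0 < ℓ)
    (lhat : ℝ) (hlhat : lhat = ℓ / h) :
    lhat * Real.sqrt (3 / (Real.pi * ((p : ℝ) + 1))) *
        Real.exp (-(3 * lhat ^ 2) / (4 * ((p : ℝ) + 1))) ≤
      erf (Real.sqrt 3 * lhat / (2 * Real.sqrt ((p : ℝ) + 1))) ∧
    erf (Real.sqrt 3 * lhat / (2 * Real.sqrt ((p : ℝ) + 1))) ≤
      lhat * Real.sqrt (3 / (Real.pi * ((p : ℝ) + 1))) := by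
  have hp : (0 : ℝ) < (p : ℝ) + 1 := by positivity
  have hlhat_pos : 0 < lhat := hlhat ▸ div_pos hℓ hh
  set t := Real.sqrt 3 * lhat / (2 * Real.sqrt ((p : ℝ) + 1)) with ht_def
  have ht : 0 ≤ t := by positivity
  have hcoef : lhat * Real.sqrt (3 / (Real.pi * ((p : ℝ) + 1))) = 2 / Real.sqrt Real.pi * t := by
    rw [Real.sqrt_div (by norm_num), Real.sqrt_mul Real.pi_pos.le, ht_def]
    field_simp
  have hexp : -(3 * lhat ^ 2) / (4 * ((p : ℝ) + 1)) = -t ^ 2 := by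
    rw [div_pow, mul_pow, mul_pow, Real.sq_sqrt hp.le, Real.sq_sqrt (by norm_num)]
    ring
  rw [hcoef, hexp]
  exact ⟨mul_exp_neg_sq_le_erf ht, erf_le_mul ht⟩
end

section
/- Let p ∈ ℕ with p ≥ 2, and let ℓ̂ ≤ 1/2 with ℓ̂ > 0. Then erf( √3 ℓ̂ / (2√(p+1)) ) < 1/2. Hence a geometric feature whose size is at most half the mesh size is lost in the spline-based segmentation with threshold 1/2, regardless of the order p ≥ 2 of the spline basis. -/
/-!
Since `exp (-s²) ≤ 1`, the error function is at most `(2/√π) t < 2t` for `t > 0`. For `p ≥ 2`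
the argument `√3 ℓ̂ / (2√(p+1))` is at most `ℓ̂ / 2 ≤ 1/4`, so the blurred value stays below `1/2`.
-/

open MeasureTheory intervalIntegral

lemma abs_erf_le (t : ℝ) : |erf t| ≤ 2 / Real.sqrt Real.pi * |t| := by
  have hint : ‖∫ s in (0:ℝ)..t, Real.exp (-s ^ 2)‖ ≤ 1 * |t - 0| :=
    norm_integral_le_of_norm_le_const fun s _ => by
      rw [Real.norm_eq_abs, abs_of_pos (Real.exp_pos _), Real.exp_le_one_iff, neg_nonpos]
      positivity
  rw [Real.norm_eq_abs, one_mul, sub_zero] at hint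
  rw [erf, abs_mul, abs_of_pos (by positivity : (0:ℝ) < 2 / Real.sqrt Real.pi)]
  gcongr

lemma one_lt_sqrt_pi : 1 < Real.sqrt Real.pi :=
  (Real.lt_sqrt zero_le_one).mpr (by linarith [Real.pi_gt_three])

lemma sqrt_three_mul_div_le_half (p : ℕ) (hp : 2 ≤ p) {x : ℝ} (hx : 0 ≤ x) :
    Real.sqrt 3 * x / (2 * Real.sqrt ((p : ℝ) + 1)) ≤ x / 2 := by
  have hsqrt : Real.sqrt 3 ≤ Real.sqrt ((p : ℝ) + 1) :=
    Real.sqrt_le_sqrt (by linarith [show (2 : ℝ) ≤ p by exact_mod_cast hp])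
  rw [div_le_div_iff₀ (by positivity) (by norm_num)]
  nlinarith [Real.sqrt_nonneg 3]

/-- A feature of relative size at most half the mesh size is lost in the spline-based
segmentation at threshold `1/2`, regardless of the spline degree `p ≥ 2`. -/
theorem small_feature_lost (p : ℕ) (hp : 2 ≤ p) (lhat : ℝ) (hpos : 0 < lhat)
    (hle : lhat ≤ 1 / 2) :
    erf (Real.sqrt 3 * lhat / (2 * Real.sqrt ((p : ℝ) + 1))) < 1 / 2 := by
  set t := Real.sqrt 3 * lhat / (2 * Real.sqrt ((p : ℝ) + 1))
  have ht_pos : 0 < t := by positivity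
  have ht_le : t ≤ lhat / 2 := sqrt_three_mul_div_le_half p hp hpos.le
  have hcoef : 2 / Real.sqrt Real.pi < 2 :=
    (div_lt_iff₀ (by positivity)).mpr (by linarith [one_lt_sqrt_pi])
  calc erf t ≤ 2 / Real.sqrt Real.pi * |t| := (le_abs_self _).trans (abs_erf_le t)
    _ < 2 * t := by rw [abs_of_pos ht_pos]; gcongr
    _ ≤ 1 / 2 := by linarith
end
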